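/- Let q ≥ 5 be a prime power, let C = PRS(q+1,q−3), and assume that the covering radius of C equals 3. Fix a monic irreducible cubic polynomial p(x) ∈ F_q[x]. For (a,b,c) ∈ F_q³∖{(0,0,0)}, let w(a,b,c) = ((a+bα_1+cα_1²)/p(α_1), …, (a+bα_q+cα_q²)/p(α_q), 0) ∈ F_q^{q+1}. Then every word w(a,b,c) satisfies d(w(a,b,c), C) ∈ {2,3}; distinct triples (a,b,c) yield words lying in distinct cosets of C; and the number of triples (a,b,c) ∈ F_q³∖{(0,0,0)} with d(w(a,b,c), C) = 3 equals (q−1)(q²+q+2)/2. -/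

import Mathlib

open Polynomial

/-- The error distance from a word `u` to a code `C`. -/
noncomputable def errDist {ι F : Type*} [Fintype ι] [DecidableEq F]
    (u : ι → F) (C : Set (ι → F)) : ℕ :=
  sInf {d | ∃ c ∈ C, hammingDist u c = d}

/-- The covering radius of a code `C`. -/
noncomputable def covRad {ι F : Type*} [Fintype ι] [DecidableEq F]
    (C : Set (ι → F)) : ℕ :=
  sSup {d | ∃ u : ι → F, errDist u C = d}

/-- The projective Reed–Solomon code of length `q + 1` and dimension `k`. -/
def PRS (F : Type*) [Field F] (k : ℕ) : Set (Option F → F) :=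
  {w | ∃ f : F[X], f.degree < (k : ℕ) ∧ (∀ x : F, w (some x) = f.eval x) ∧
    w none = f.coeff (k - 1)}

/-- The word `((a+bα+cα²)/p(α))_{α ∈ F_q} ⌢ (0)` attached to a triple
`t = (a, b, c)` and a polynomial `p`. -/
noncomputable def wCubic {F : Type*} [Field F] (p : F[X]) (t : F × F × F) :
    Option F → F :=
  fun i => i.elim 0 (fun x => (t.1 + t.2.1 * x + t.2.2 * x ^ 2) / p.eval x)

/-!
The codeword of `f` (`deg f < q - 3`) differs from `wCubic p t` exactly at the `x` with
`g(x) ≠ 0`, where `g = f p - (a + bX + cX²)`, and at the last coordinate iff the coefficient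
`f_{q-4}` is nonzero. Since `g ≠ 0` has degree `≤ q - 1`, and `≤ q - 2` when `f_{q-4} = 0`, and a
nonzero polynomial has at most its degree many roots, the distance is at least `2`. Equality forces
`g = l ∏_{x ∉ s} (X - x)` with `|s| ∈ {1, 2}`, i.e. `a + bX + cX² ≡ -l ∏_{x ∉ s} (X - x) mod p`.
Each such pair `(l, s)` thus determines a unique triple, and distinct pairs give distinct triples
because `p` has no roots; so `(q - 1)(q + C(q, 2))` nonzero triples are at distance `2`, and the
covering radius puts all others at distance `3`. Distinct cosets follow from linearity in `t`:
`w(t₁) - w(t₂) = w(t₁ - t₂)` is at distance `≥ 2` from the code.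
-/

open Finset Lagrange

section ErrorDistance

variable {ι F : Type*} [Fintype ι] [DecidableEq F] {C : Set (ι → F)} {u c : ι → F}

lemma errDist_le_hammingDist (hc : c ∈ C) : errDist u C ≤ hammingDist u c :=
  Nat.sInf_le ⟨c, hc, rfl⟩

lemma exists_hammingDist_eq_errDist (hC : C.Nonempty) : ∃ c ∈ C, hammingDist u c = errDist u C :=
  Nat.sInf_mem (hC.image (hammingDist u))

lemma le_errDist {n : ℕ} (hC : C.Nonempty) (h : ∀ c ∈ C, n ≤ hammingDist u c) :
    n ≤ errDist u C := by
  obtain ⟨c, hc, hdist⟩ := exists_hammingDist_eq_errDist (u := u) hC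
  exact hdist ▸ h c hc

lemma errDist_le_covRad [Finite F] : errDist u C ≤ covRad C :=
  le_csSup (Set.finite_range fun v => errDist v C).bddAbove ⟨u, rfl⟩

end ErrorDistance

lemma hammingDist_option {ι α : Type*} [Fintype ι] [DecidableEq α] (u v : Option ι → α) :
    hammingDist u v =
      #{x | u (some x) ≠ v (some x)} + if u none = v none then 0 else 1 := by
  rw [hammingDist, card_filter, Fintype.sum_option, card_filter, add_comm]
  split_ifs <;> simp_all

lemma zero_mem_PRS (F : Type*) [Field F] (k : ℕ) : 0 ∈ PRS F k :=
  ⟨0, by simp, fun _ => by simp, by simp⟩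

namespace Polynomial

lemma dvd_add_iff_eq_neg_modByMonic {R : Type*} [CommRing R] [Nontrivial R] {p a b : R[X]}
    (hp : p.Monic) (ha : a.degree < p.degree) : p ∣ a + b ↔ a = (-b) %ₘ p := by
  rw [← modByMonic_eq_zero_iff_dvd hp, add_modByMonic, (modByMonic_eq_self_iff hp).2 ha,
    neg_modByMonic, add_eq_zero_iff_eq_neg]

lemma eval_nodal_id_eq_zero_iff {R : Type*} [CommRing R] [IsDomain R] {s : Finset R} {x : R} :
    (nodal s id).eval x = 0 ↔ x ∈ s := by
  simp [eval_nodal, prod_eq_zero_iff, sub_eq_zero]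

lemma C_mul_nodal_id_inj {R : Type*} [CommRing R] [IsDomain R] {l₁ l₂ : R} {s₁ s₂ : Finset R}
    (hl : l₁ ≠ 0) (h : C l₁ * nodal s₁ id = C l₂ * nodal s₂ id) : l₁ = l₂ ∧ s₁ = s₂ := by
  have hl₁₂ : l₁ = l₂ := by
    simpa [nodal_monic.leadingCoeff] using congrArg leadingCoeff h
  subst hl₁₂
  have hs := mul_left_cancel₀ (C_ne_zero.2 hl) h
  refine ⟨rfl, ?_⟩
  ext x
  rw [← eval_nodal_id_eq_zero_iff, hs, eval_nodal_id_eq_zero_iff]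

variable {R : Type*} [CommRing R] [IsDomain R] [Fintype R] [DecidableEq R]

lemma card_le_card_filter_eval_ne_zero_add_natDegree {g : R[X]} (hg : g ≠ 0) :
    Fintype.card R ≤ #{x | g.eval x ≠ 0} + g.natDegree := by
  have hroots : #{x | g.eval x = 0} ≤ g.natDegree :=
    card_le_degree_of_subset_roots fun x hx => by simpa [mem_roots hg] using hx
  have := card_filter_add_card_filter_not (s := univ) fun x => g.eval x ≠ 0
  simp only [not_not, card_univ] at this
  omega

lemma eq_C_leadingCoeff_mul_nodal {g : R[X]} (hg : g ≠ 0)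
    (h : #{x | g.eval x ≠ 0} + g.natDegree ≤ Fintype.card R) :
    g = C g.leadingCoeff * nodal {x | g.eval x = 0} id := by
  have hdvd : nodal {x | g.eval x = 0} id ∣ g := by
    simp only [nodal_eq, id_eq]
    rw [prod_eq_multiset_prod, Multiset.prod_X_sub_C_dvd_iff_le_roots hg,
      Multiset.le_iff_subset (nodup _)]
    intro x hx
    simpa [mem_roots hg] using hx
  have hcard := card_filter_add_card_filter_not (s := univ) fun x => g.eval x = 0
  simp only [card_univ, ← ne_eq] at hcard
  refine eq_leadingCoeff_mul_of_monic_of_dvd_of_natDegree_le nodal_monic hdvd ?_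
  rw [natDegree_nodal]
  omega

end Polynomial

section Triples

variable {F : Type*} [Field F]

noncomputable def quadPoly (t : F × F × F) : F[X] := C t.2.2 * X ^ 2 + C t.2.1 * X + C t.1

noncomputable def coeffTriple (r : F[X]) : F × F × F := (r.coeff 0, r.coeff 1, r.coeff 2)

lemma eval_quadPoly (t : F × F × F) (x : F) :
    (quadPoly t).eval x = t.1 + t.2.1 * x + t.2.2 * x ^ 2 := by
  simp only [quadPoly, eval_add, eval_mul, eval_C, eval_pow, eval_X]
  ring

lemma natDegree_quadPoly_le (t : F × F × F) : (quadPoly t).natDegree ≤ 2 :=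
  natDegree_quadratic_le

lemma degree_quadPoly_lt (t : F × F × F) : (quadPoly t).degree < 3 :=
  degree_quadratic_le.trans_lt (by decide)

@[simp] lemma quadPoly_zero : quadPoly (0 : F × F × F) = 0 := by simp [quadPoly]

lemma coeffTriple_quadPoly (t : F × F × F) : coeffTriple (quadPoly t) = t := by
  simp [coeffTriple, quadPoly, coeff_X, coeff_C]

lemma quadPoly_injective : Function.Injective (quadPoly (F := F)) :=
  Function.LeftInverse.injective coeffTriple_quadPoly

lemma quadPoly_eq_zero_iff {t : F × F × F} : quadPoly t = 0 ↔ t = 0 :=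
  quadPoly_injective.eq_iff' quadPoly_zero

lemma quadPoly_coeffTriple {r : F[X]} (hr : r.degree < 3) : quadPoly (coeffTriple r) = r := by
  ext (_ | _ | _ | n)
  · simp [quadPoly, coeffTriple, coeff_C]
  · simp [quadPoly, coeffTriple]
  · simp [quadPoly, coeffTriple]
  · rw [coeff_eq_zero_of_degree_lt (hr.trans_le (by exact_mod_cast (by omega : 3 ≤ n + 3)))]
    simp [quadPoly]

lemma wCubic_some (p : F[X]) (t : F × F × F) (x : F) :
    wCubic p t (some x) = (quadPoly t).eval x / p.eval x := by
  simp [wCubic, eval_quadPoly]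

lemma wCubic_sub (p : F[X]) (t₁ t₂ : F × F × F) :
    wCubic p (t₁ - t₂) = wCubic p t₁ - wCubic p t₂ := by
  ext (_ | x)
  · simp [wCubic]
  · simp only [wCubic, Option.elim, Prod.fst_sub, Prod.snd_sub, Pi.sub_apply]
    ring

lemma mul_sub_quadPoly_ne_zero {p : F[X]} {t : F × F × F} (hdeg : p.natDegree = 3) (ht : t ≠ 0)
    (f : F[X]) : f * p - quadPoly t ≠ 0 := by
  intro h
  rw [sub_eq_zero] at h
  rcases eq_or_ne f 0 with rfl | hf
  · exact ht (quadPoly_eq_zero_iff.1 (by rw [← h, zero_mul]))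
  · have hp : p ≠ 0 := by rintro rfl; simp at hdeg
    have := congrArg natDegree h
    rw [natDegree_mul hf hp] at this
    have := natDegree_quadPoly_le t
    omega

end Triples

section Cubic

variable {F : Type*} [Field F] [Fintype F] [DecidableEq F] {p : F[X]} {t : F × F × F}

lemma natDegree_mul_sub_quadPoly_add_two_le (hq : 5 ≤ Fintype.card F) (hdeg : p.natDegree = 3)
    (t : F × F × F) {f : F[X]} (hf : f.degree < (Fintype.card F - 3 : ℕ)) :
    (f * p - quadPoly t).natDegree + 2 ≤
      Fintype.card F + if f.coeff (Fintype.card F - 3 - 1) = 0 then 0 else 1 := by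
  have hcoeff := (degree_lt_iff_coeff_zero f _).1 hf
  have hfp : (f * p - quadPoly t).natDegree ≤ max (f.natDegree + 3) 2 :=
    (natDegree_sub_le _ _).trans
      (max_le_max (hdeg ▸ natDegree_mul_le) (natDegree_quadPoly_le t))
  split_ifs with hc
  · have : f.natDegree ≤ Fintype.card F - 5 := natDegree_le_iff_coeff_eq_zero.2 fun N hN => by
      rcases eq_or_ne N (Fintype.card F - 3 - 1) with rfl | hN'
      · exact hc
      · exact hcoeff N (by omega)
    omega
  · have : f.natDegree ≤ Fintype.card F - 4 :=
      natDegree_le_iff_coeff_eq_zero.2 fun N hN => hcoeff N (by omega)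
    omega

lemma hammingDist_wCubic (hp : ∀ x, p.eval x ≠ 0) (t : F × F × F) {c : Option F → F}
    {f : F[X]} {j : ℕ} (hsome : ∀ x, c (some x) = f.eval x) (hnone : c none = f.coeff j) :
    hammingDist (wCubic p t) c =
      #{x | (f * p - quadPoly t).eval x ≠ 0} + if f.coeff j = 0 then 0 else 1 := by
  rw [hammingDist_option, hnone]
  congr 1
  · refine congrArg card (filter_congr fun x _ => not_congr ?_)
    rw [wCubic_some, hsome, div_eq_iff (hp x), eval_sub, eval_mul, sub_eq_zero, eq_comm]
  · simp [wCubic, @eq_comm _ (0 : F)]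

lemma two_le_hammingDist_wCubic (hq : 5 ≤ Fintype.card F) (hirr : Irreducible p)
    (hdeg : p.natDegree = 3) (ht : t ≠ 0) {c : Option F → F}
    (hc : c ∈ PRS F (Fintype.card F - 3)) : 2 ≤ hammingDist (wCubic p t) c := by
  obtain ⟨f, hf, hsome, hnone⟩ := hc
  have hp x : p.eval x ≠ 0 := hirr.not_isRoot_of_natDegree_ne_one (by omega)
  rw [hammingDist_wCubic hp t hsome hnone]
  have := card_le_card_filter_eval_ne_zero_add_natDegree (mul_sub_quadPoly_ne_zero hdeg ht f)
  have := natDegree_mul_sub_quadPoly_add_two_le hq hdeg t hf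
  omega

lemma two_le_errDist_wCubic (hq : 5 ≤ Fintype.card F) (hirr : Irreducible p)
    (hdeg : p.natDegree = 3) (ht : t ≠ 0) :
    2 ≤ errDist (wCubic p t) (PRS F (Fintype.card F - 3)) :=
  le_errDist ⟨0, zero_mem_PRS F _⟩ fun _ hc => two_le_hammingDist_wCubic hq hirr hdeg ht hc

lemma wCubic_notMem_PRS (hq : 5 ≤ Fintype.card F) (hirr : Irreducible p)
    (hdeg : p.natDegree = 3) (ht : t ≠ 0) : wCubic p t ∉ PRS F (Fintype.card F - 3) := by
  intro h
  have := two_le_hammingDist_wCubic hq hirr hdeg ht h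
  rw [hammingDist_self] at this
  omega

end Cubic

section DistanceTwo

variable {F : Type*} [Field F] [Fintype F] [DecidableEq F] {p : F[X]} {t : F × F × F}

lemma exists_dvd_of_hammingDist_wCubic_le_two (hq : 5 ≤ Fintype.card F) (hirr : Irreducible p)
    (hdeg : p.natDegree = 3) (ht : t ≠ 0) {c : Option F → F}
    (hc : c ∈ PRS F (Fintype.card F - 3)) (hd : hammingDist (wCubic p t) c ≤ 2) :
    ∃ l ≠ 0, ∃ s : Finset F, (#s = 1 ∨ #s = 2) ∧ p ∣ quadPoly t + C l * nodal sᶜ id := by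
  obtain ⟨f, hf, hsome, hnone⟩ := hc
  have hp x : p.eval x ≠ 0 := hirr.not_isRoot_of_natDegree_ne_one (by omega)
  rw [hammingDist_wCubic hp t hsome hnone] at hd
  have hdeg_g := natDegree_mul_sub_quadPoly_add_two_le hq hdeg t hf
  set g := f * p - quadPoly t with hg_def
  have hg : g ≠ 0 := mul_sub_quadPoly_ne_zero hdeg ht f
  have hlow := card_le_card_filter_eval_ne_zero_add_natDegree hg
  have hg_eq := eq_C_leadingCoeff_mul_nodal hg (by split_ifs at hd hdeg_g <;> omega)
  refine ⟨g.leadingCoeff, leadingCoeff_ne_zero.2 hg, ({x | g.eval x ≠ 0} : Finset F), ?_, f, ?_⟩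
  · split_ifs at hd hdeg_g <;> omega
  · have hcompl : ({x | g.eval x ≠ 0} : Finset F)ᶜ = ({x | g.eval x = 0} : Finset F) := by ext; simp
    rw [hcompl, ← hg_eq, hg_def]
    ring

lemma errDist_wCubic_le_two_of_dvd (hq : 5 ≤ Fintype.card F) (hirr : Irreducible p)
    (hdeg : p.natDegree = 3) {l : F} (hl : l ≠ 0) {s : Finset F} (hs : #s = 1 ∨ #s = 2)
    (hdvd : p ∣ quadPoly t + C l * nodal sᶜ id) :
    errDist (wCubic p t) (PRS F (Fintype.card F - 3)) ≤ 2 := by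
  obtain ⟨f, hf⟩ := hdvd
  have hp x : p.eval x ≠ 0 := hirr.not_isRoot_of_natDegree_ne_one (by omega)
  have hp0 : p ≠ 0 := by rintro rfl; simp at hdeg
  have hs2 : #s ≤ 2 := by omega
  have hsum : (quadPoly t + C l * nodal sᶜ id).natDegree = Fintype.card F - #s := by
    have hN : (C l * nodal sᶜ id).natDegree = Fintype.card F - #s := by
      rw [natDegree_C_mul hl, natDegree_nodal, card_compl]
    rw [natDegree_add_eq_right_of_natDegree_lt (hN ▸ (natDegree_quadPoly_le t).trans_lt
      (by omega)), hN]
  have hf0 : f ≠ 0 := by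
    rintro rfl
    rw [mul_zero] at hf
    rw [hf, natDegree_zero] at hsum
    omega
  have hfdeg : f.natDegree + 3 = Fintype.card F - #s := by
    rw [← hsum, hf, natDegree_mul hp0 hf0, hdeg, add_comm]
  have herr : ({x | (f * p - quadPoly t).eval x ≠ 0} : Finset F) = s := by
    have : f * p - quadPoly t = C l * nodal sᶜ id := by rw [mul_comm, ← hf]; ring
    ext x
    simp [this, hl, eval_nodal_id_eq_zero_iff]
  let c : Option F → F := fun i => i.elim (f.coeff (Fintype.card F - 3 - 1)) f.eval
  have hc : c ∈ PRS F (Fintype.card F - 3) :=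
    ⟨f, (natDegree_lt_iff_degree_lt hf0).1 (by omega), fun _ => rfl, rfl⟩
  calc errDist (wCubic p t) (PRS F (Fintype.card F - 3))
      ≤ hammingDist (wCubic p t) c := errDist_le_hammingDist hc
    _ = #s + if f.coeff (Fintype.card F - 3 - 1) = 0 then 0 else 1 := by
      rw [hammingDist_wCubic hp t (fun _ => rfl) rfl, herr]
    _ ≤ 2 := by
      rcases hs with hs | hs
      · split_ifs <;> omega
      · rw [if_pos (coeff_eq_zero_of_natDegree_lt (by omega))]
        omega

end DistanceTwo

section Counting

variable {F : Type*} [Field F] [Fintype F] [DecidableEq F] {p : F[X]} {t : F × F × F}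

def errorPatterns (F : Type*) [Field F] [Fintype F] [DecidableEq F] : Finset (F × Finset F) :=
  ({l | l ≠ 0} : Finset F) ×ˢ (univ.powersetCard 1 ∪ univ.powersetCard 2)

lemma mem_errorPatterns {a : F × Finset F} :
    a ∈ errorPatterns F ↔ a.1 ≠ 0 ∧ (#a.2 = 1 ∨ #a.2 = 2) := by
  simp [errorPatterns, and_or_left]

lemma card_errorPatterns :
    #(errorPatterns F) = (Fintype.card F - 1) * ((Fintype.card F).choose 1 +
      (Fintype.card F).choose 2) := by
  rw [errorPatterns, card_product, card_union_of_disjoint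
    (univ.pairwise_disjoint_powersetCard (by decide)), card_powersetCard, card_powersetCard,
    filter_ne' univ 0, card_erase_of_mem (mem_univ 0), card_univ]

/-- For `a = (l, s)`, the unique `quadPoly t` admitting `f` with
`f * p - quadPoly t = l * ∏_{x ∉ s} (X - x)`: the codeword of `f` is then at distance `2` from
`wCubic p t`, with errors exactly at the positions in `s`. -/
noncomputable def errorNumerator (p : F[X]) (a : F × Finset F) : F[X] :=
  (-(C a.1 * nodal a.2ᶜ id)) %ₘ p

lemma errDist_wCubic_eq_two_iff (hq : 5 ≤ Fintype.card F) (hmonic : p.Monic)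
    (hirr : Irreducible p) (hdeg : p.natDegree = 3) (ht : t ≠ 0) :
    errDist (wCubic p t) (PRS F (Fintype.card F - 3)) = 2 ↔
      ∃ a ∈ errorPatterns F, quadPoly t = errorNumerator p a := by
  have hQ : (quadPoly t).degree < p.degree := by
    rw [degree_eq_natDegree hmonic.ne_zero, hdeg]
    exact degree_quadPoly_lt t
  simp only [errorNumerator, mem_errorPatterns, ← dvd_add_iff_eq_neg_modByMonic hmonic hQ,
    Prod.exists]
  constructor
  · intro h
    obtain ⟨c, hc, hcd⟩ := exists_hammingDist_eq_errDist (u := wCubic p t) ⟨0, zero_mem_PRS F _⟩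
    obtain ⟨l, hl, s, hs, hdvd⟩ :=
      exists_dvd_of_hammingDist_wCubic_le_two hq hirr hdeg ht hc (hcd.trans h).le
    exact ⟨l, s, ⟨hl, hs⟩, hdvd⟩
  · rintro ⟨l, s, ⟨hl, hs⟩, hdvd⟩
    exact le_antisymm (errDist_wCubic_le_two_of_dvd hq hirr hdeg hl hs hdvd)
      (two_le_errDist_wCubic hq hirr hdeg ht)

lemma C_mul_nodal_compl_eq_of_dvd_sub (hirr : Irreducible p) (hdeg : p.natDegree = 3)
    {l₁ l₂ : F} {s₁ s₂ : Finset F} (h₁ : #s₁ ≤ 2) (h₂ : #s₂ ≤ 2)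
    (hdvd : p ∣ C l₁ * nodal s₁ᶜ id - C l₂ * nodal s₂ᶜ id) :
    C l₁ * nodal s₁ᶜ id = C l₂ * nodal s₂ᶜ id := by
  rw [← sub_eq_zero]
  by_contra hne
  obtain ⟨k, hk⟩ := hdvd
  have hp0 : p ≠ 0 := by rintro rfl; simp at hdeg
  have hk0 : k ≠ 0 := by rintro rfl; rw [mul_zero] at hk; exact hne hk
  have hroots : #(s₁ ∪ s₂)ᶜ ≤ k.natDegree := card_le_degree_of_subset_roots fun x hx => by
    have hx' : x ∉ s₁ ∧ x ∉ s₂ := by simpa using hx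
    have hp : p.eval x ≠ 0 := hirr.not_isRoot_of_natDegree_ne_one (by omega)
    have := congrArg (eval x) hk
    simp only [eval_sub, eval_mul, eval_C, (eval_nodal_id_eq_zero_iff).2 (mem_compl.2 hx'.1),
      (eval_nodal_id_eq_zero_iff).2 (mem_compl.2 hx'.2), mul_zero, sub_zero] at this
    exact (mem_roots hk0).2 ((mul_eq_zero.1 this.symm).resolve_left hp)
  have hdeg_le : (p * k).natDegree ≤ max (Fintype.card F - #s₁) (Fintype.card F - #s₂) := by
    rw [← hk]
    refine (natDegree_sub_le _ _).trans (max_le_max ?_ ?_) <;>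
      exact (natDegree_C_mul_le _ _).trans (by rw [natDegree_nodal, card_compl])
  rw [natDegree_mul hp0 hk0, hdeg] at hdeg_le
  have := card_union_le s₁ s₂
  have := card_le_univ (s₁ ∪ s₂)
  rw [card_compl] at hroots
  omega

lemma errorNumerator_injOn (hmonic : p.Monic) (hirr : Irreducible p)
    (hdeg : p.natDegree = 3) : Set.InjOn (errorNumerator p) (errorPatterns F) := by
  rintro ⟨l₁, s₁⟩ h₁ ⟨l₂, s₂⟩ h₂ heq
  simp only [mem_coe, mem_errorPatterns] at h₁ h₂
  have hdvd : p ∣ C l₁ * nodal s₁ᶜ id - C l₂ * nodal s₂ᶜ id := by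
    rw [← modByMonic_eq_zero_iff_dvd hmonic, sub_modByMonic, sub_eq_zero, ← neg_inj,
      ← neg_modByMonic, ← neg_modByMonic]
    exact heq
  obtain ⟨rfl, hs⟩ := C_mul_nodal_id_inj h₁.1
    (C_mul_nodal_compl_eq_of_dvd_sub hirr hdeg (by omega) (by omega) hdvd)
  rw [compl_inj_iff.1 hs]

lemma errorNumerator_ne_zero (hmonic : p.Monic) (hirr : Irreducible p) (hdeg : p.natDegree = 3)
    {a : F × Finset F} (ha : a.1 ≠ 0) : errorNumerator p a ≠ 0 := by
  rw [errorNumerator, Ne, modByMonic_eq_zero_iff_dvd hmonic, dvd_neg,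
    (isUnit_C.2 ha.isUnit).dvd_mul_left, nodal_eq, hirr.prime.dvd_finsetProd_iff]
  rintro ⟨x, -, hx⟩
  have := natDegree_le_of_dvd hx (X_sub_C_ne_zero _)
  rw [natDegree_X_sub_C] at this
  omega

lemma card_errDist_wCubic_eq_two (hq : 5 ≤ Fintype.card F) (hmonic : p.Monic)
    (hirr : Irreducible p) (hdeg : p.natDegree = 3) :
    #{t | t ≠ 0 ∧ errDist (wCubic p t) (PRS F (Fintype.card F - 3)) = 2} =
      #(errorPatterns F) := by
  have hnum a : quadPoly (coeffTriple (errorNumerator p a)) = errorNumerator p a :=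
    quadPoly_coeffTriple <| (degree_modByMonic_lt _ hmonic).trans_eq <| by
      rw [degree_eq_natDegree hmonic.ne_zero, hdeg]; rfl
  symm
  refine card_nbij (fun a => coeffTriple (errorNumerator p a)) (fun a ha => ?_)
    (fun a ha b hb hab => errorNumerator_injOn hmonic hirr hdeg ha hb ?_) (fun t ht => ?_)
  · have ht0 : coeffTriple (errorNumerator p a) ≠ 0 := fun h0 =>
      errorNumerator_ne_zero hmonic hirr hdeg (mem_errorPatterns.1 ha).1
        (by rw [← hnum, h0, quadPoly_zero])
    exact mem_filter.2
      ⟨mem_univ _, ht0, (errDist_wCubic_eq_two_iff hq hmonic hirr hdeg ht0).2 ⟨a, ha, hnum a⟩⟩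
  · rw [← hnum a, ← hnum b]
    exact congrArg quadPoly hab
  · obtain ⟨-, ht0, ht2⟩ := mem_filter.1 (mem_coe.1 ht)
    obtain ⟨a, ha, hQ⟩ := (errDist_wCubic_eq_two_iff hq hmonic hirr hdeg ht0).1 ht2
    exact ⟨a, ha, by dsimp only; rw [← hQ, coeffTriple_quadPoly]⟩

end Counting

lemma Nat.eq_div_two_of_add_eq_pow_three {q n : ℕ} (hq : 1 ≤ q)
    (h : (q - 1) * (q.choose 1 + q.choose 2) + n + 1 = q ^ 3) :
    n = (q - 1) * (q ^ 2 + q + 2) / 2 := by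
  obtain ⟨m, rfl⟩ : ∃ m, q = m + 1 := ⟨q - 1, by omega⟩
  have hc : (m + 1).choose 2 * 2 = (m + 1) * m := by
    rw [Nat.choose_two_right, Nat.div_mul_cancel (Nat.even_mul_pred_self _).two_dvd,
      add_tsub_cancel_right]
  simp only [add_tsub_cancel_right, Nat.choose_one_right] at h ⊢
  refine (Nat.div_eq_of_eq_mul_left two_pos ?_).symm
  zify at h hc ⊢
  linear_combination (m : ℤ) * hc - 2 * h

section DeepHoles

variable {F : Type*} [Field F] [Fintype F] [DecidableEq F] {p : F[X]}

lemma errDist_wCubic_eq_two_or_three (hq : 5 ≤ Fintype.card F)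
    (hcov : covRad (PRS F (Fintype.card F - 3)) = 3) (hirr : Irreducible p)
    (hdeg : p.natDegree = 3) {t : F × F × F} (ht : t ≠ 0) :
    errDist (wCubic p t) (PRS F (Fintype.card F - 3)) = 2 ∨
      errDist (wCubic p t) (PRS F (Fintype.card F - 3)) = 3 := by
  have := two_le_errDist_wCubic hq hirr hdeg ht
  have := (errDist_le_covRad (u := wCubic p t)).trans_eq hcov
  omega

lemma card_errDist_wCubic_eq_three (hq : 5 ≤ Fintype.card F)
    (hcov : covRad (PRS F (Fintype.card F - 3)) = 3) (hmonic : p.Monic)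
    (hirr : Irreducible p) (hdeg : p.natDegree = 3) :
    #{t | t ≠ 0 ∧ errDist (wCubic p t) (PRS F (Fintype.card F - 3)) = 3} =
      (Fintype.card F - 1) * (Fintype.card F ^ 2 + Fintype.card F + 2) / 2 := by
  refine Nat.eq_div_two_of_add_eq_pow_three (by omega) ?_
  rw [← card_errorPatterns, ← card_errDist_wCubic_eq_two hq hmonic hirr hdeg,
    ← card_union_of_disjoint (disjoint_filter.2 fun t _ h₂ h₃ => by omega)]
  convert card_erase_add_one (mem_univ (0 : F × F × F)) using 3
  · ext t
    simp only [mem_union, mem_filter, mem_univ, true_and, mem_erase, and_true, ← and_or_left,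
      and_iff_left_iff_imp]
    exact errDist_wCubic_eq_two_or_three hq hcov hirr hdeg
  · rw [card_univ, Fintype.card_prod, Fintype.card_prod]
    ring

end DeepHoles

/-- Let `C = PRS(q+1, q-3)` with covering radius `3`, and `p` a monic irreducible
cubic polynomial. Every word `w(a,b,c)` with `(a,b,c) ≠ (0,0,0)` has error distance
`2` or `3` to `C`; distinct triples give distinct cosets of `C`; and exactly
`(q-1)(q²+q+2)/2` nonzero triples give deep holes (error distance `3`). -/
theorem stmt16 {F : Type*} [Field F] [Fintype F] [DecidableEq F]
    (hq : 5 ≤ Fintype.card F)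
    (hcov : covRad (PRS F (Fintype.card F - 3)) = 3)
    (p : F[X]) (hmonic : p.Monic) (hirr : Irreducible p) (hdeg : p.natDegree = 3) :
    (∀ t : F × F × F, t ≠ (0, 0, 0) →
      errDist (wCubic p t) (PRS F (Fintype.card F - 3)) = 2 ∨
      errDist (wCubic p t) (PRS F (Fintype.card F - 3)) = 3) ∧
    (∀ t1 t2 : F × F × F, t1 ≠ (0, 0, 0) → t2 ≠ (0, 0, 0) → t1 ≠ t2 →
      wCubic p t1 - wCubic p t2 ∉ PRS F (Fintype.card F - 3)) ∧
    Nat.card {t : F × F × F // t ≠ (0, 0, 0) ∧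
        errDist (wCubic p t) (PRS F (Fintype.card F - 3)) = 3}
      = (Fintype.card F - 1) * ((Fintype.card F) ^ 2 + Fintype.card F + 2) / 2 := by
  refine ⟨fun t ht => errDist_wCubic_eq_two_or_three hq hcov hirr hdeg ht,
    fun t₁ t₂ _ _ hne => ?_, ?_⟩
  · rw [← wCubic_sub]
    exact wCubic_notMem_PRS hq hirr hdeg (sub_ne_zero.2 hne)
  · rw [Nat.card_eq_fintype_card, Fintype.card_subtype]
    exact card_errDist_wCubic_eq_three hq hcov hmonic hirr hdeg
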